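/- For every m ≥ 1, the number of pairs (σ,α) of permutations of {1,...,2m} such that α is a fixed point free involution and the subgroup generated by σ and α acts transitively on {1,...,2m} equals (2m−1)! · i_{m+1}, where i_{m+1} is the number of indecomposable fixed point free involutions of S_{2m+2}. -/

import Mathlib

/-- A pair of permutations of `{0,...,n-1}` is transitive (a labeled hypermap)
if the subgroup it generates acts transitively. -/
def IsTransitivePair {n : ℕ} (σ α : Equiv.Perm (Fin n)) : Prop :=
  ∀ x y : Fin n, ∃ g ∈ Subgroup.closure ({σ, α} : Set (Equiv.Perm (Fin n))), g x = y

/-- A permutation of `{0,...,m-1}` is indecomposable if it fixes no proper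
initial segment `{0,...,p-1}` (for `1 ≤ p < m`) setwise. -/
def Indecomposable {m : ℕ} (α : Equiv.Perm (Fin m)) : Prop :=
  ∀ p : ℕ, 1 ≤ p → p < m → ∃ i : Fin m, (i : ℕ) < p ∧ p ≤ ((α i : ℕ))

/-- `numIndecFPFInv m` is the number of indecomposable fixed point free
involutions of `S_{2m}`. -/
noncomputable def numIndecFPFInv (m : ℕ) : ℕ :=
  Nat.card {α : Equiv.Perm (Fin (2 * m)) //
    Indecomposable α ∧ α * α = 1 ∧ ∀ x, α x ≠ x}

/-! Write `F n`, `I n` and `T n` for the numbers of fixed point free involutions, indecomposable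
fixed point free involutions and labeled maps on `n` points. Cutting an involution at its first
invariant initial segment gives `F n = ∑ₖ I k * F (n - k)`, and pairing `0` with its image gives
`F (n + 2) = (n + 1) * F n`; together, `n * F n = ∑ₖ I (k + 2) * F (n - k)`. Cutting a pair
`(σ, α)` along the orbit of `0` under `⟨σ, α⟩` gives
`n ! * F n = ∑ₖ (n - 1).choose (k - 1) * T k * ((n - k)! * F (n - k))`. Multiplying the former by
`(n - 1)!` and comparing, strong induction yields `T n = (n - 1)! * I (n + 2)`. -/

open Equiv MulAction

variable {β γ : Type*}

def IsFPFInvolution (a : Perm β) : Prop := a * a = 1 ∧ ∀ x, a x ≠ x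

theorem isFPFInvolution_iff {a : Perm β} : IsFPFInvolution a ↔ ∀ x, a (a x) = x ∧ a x ≠ x := by
  simp only [IsFPFInvolution, Perm.ext_iff, Perm.mul_apply, Perm.one_apply, forall_and]

theorem IsFPFInvolution.apply_apply {a : Perm β} (ha : IsFPFInvolution a) (x : β) :
    a (a x) = x :=
  (isFPFInvolution_iff.1 ha x).1

theorem isFPFInvolution_permCongr (e : β ≃ γ) {a : Perm β} :
    IsFPFInvolution (e.permCongr a) ↔ IsFPFInvolution a := by
  simp only [isFPFInvolution_iff, e.surjective.forall, permCongr_apply, symm_apply_apply,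
    e.apply_eq_iff_eq, ne_eq]

theorem isFPFInvolution_subtypeCongr {p : β → Prop} [DecidablePred p] {a : Perm {x // p x}}
    {b : Perm {x // ¬ p x}} :
    IsFPFInvolution (a.subtypeCongr b) ↔ IsFPFInvolution a ∧ IsFPFInvolution b := by
  simp only [isFPFInvolution_iff]
  constructor
  · intro h
    refine ⟨fun x => ?_, fun x => ?_⟩
    · simpa [Perm.subtypeCongr.left_apply_subtype, Subtype.ext_iff] using h x
    · simpa [Perm.subtypeCongr.right_apply_subtype, Subtype.ext_iff] using h x
  · rintro ⟨ha, hb⟩ x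
    by_cases hx : p x
    · simpa [Perm.subtypeCongr.left_apply _ _ hx, Subtype.ext_iff] using ha ⟨x, hx⟩
    · simpa [Perm.subtypeCongr.right_apply _ _ hx, Subtype.ext_iff] using hb ⟨x, hx⟩

theorem Nat.card_eq_sum_card_fiber {A ι : Type*} [Finite A] [DecidableEq ι] (f : A → ι)
    (t : Finset ι) (h : ∀ a, f a ∈ t) : Nat.card A = ∑ i ∈ t, Nat.card {a // f a = i} := by
  classical
  have := Fintype.ofFinite A
  simp only [Nat.card_eq_fintype_card, Fintype.card_subtype]
  exact Finset.card_eq_sum_card_fiberwise fun a _ => h a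

theorem Nat.card_subtype_comp_of_injective {X Y : Type*} {Φ : X → Y} (hΦ : Function.Injective Φ)
    {R : Y → Prop} (hR : ∀ y, R y → y ∈ Set.range Φ) :
    Nat.card {x // R (Φ x)} = Nat.card {y // R y} :=
  Nat.card_congr <| Equiv.ofBijective (fun x => ⟨Φ x.1, x.2⟩)
    ⟨fun x y hxy => Subtype.ext (hΦ (congrArg Subtype.val hxy)), fun ⟨y, hy⟩ => by
      obtain ⟨x, rfl⟩ := hR y hy
      exact ⟨⟨x, hy⟩, rfl⟩⟩

theorem Equiv.Perm.exists_subtypeCongr_eq {p : β → Prop} [DecidablePred p] {f : Perm β}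
    (hf : ∀ x, p (f x) ↔ p x) :
    ∃ (a : Perm {x // p x}) (b : Perm {x // ¬ p x}), a.subtypeCongr b = f :=
  ⟨f.subtypePerm hf, f.subtypePerm fun x => not_congr (hf x), by
    ext x
    by_cases hx : p x
    · simp [Perm.subtypeCongr.left_apply _ _ hx]
    · simp [Perm.subtypeCongr.right_apply _ _ hx]⟩

theorem Nat.card_subtype_subtypeCongr (p : β → Prop) [DecidablePred p] {R : Perm β → Prop}
    (hR : ∀ f, R f → ∀ x, p (f x) ↔ p x) :
    Nat.card {ab : Perm {x // p x} × Perm {x // ¬ p x} // R (ab.1.subtypeCongr ab.2)} =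
      Nat.card {f // R f} :=
  Nat.card_subtype_comp_of_injective (Φ := Perm.subtypeCongrHom p)
    (Perm.subtypeCongrHom_injective p) fun f hf => by
      obtain ⟨a, b, rfl⟩ := Perm.exists_subtypeCongr_eq (hR f hf)
      exact ⟨(a, b), rfl⟩

variable (β) in
noncomputable def numFPFInv : ℕ := Nat.card {a : Perm β // IsFPFInvolution a}

theorem numFPFInv_congr (e : β ≃ γ) : numFPFInv β = numFPFInv γ :=
  Nat.card_congr <| e.permCongr.subtypeEquiv fun _ => (isFPFInvolution_permCongr e).symm

theorem numFPFInv_eq_fin [Fintype β] : numFPFInv β = numFPFInv (Fin (Fintype.card β)) :=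
  numFPFInv_congr (Fintype.equivFin β)

theorem numFPFInv_fin_zero : numFPFInv (Fin 0) = 1 :=
  Nat.card_eq_one_iff_exists.2
    ⟨⟨1, mul_one 1, finZeroElim⟩, fun _ => Subtype.ext (Subsingleton.elim _ _)⟩

theorem isFPFInvolution_and_apply_eq_iff [DecidableEq β] {z₀ z₁ : β} (h : z₀ ≠ z₁)
    (hβ : ∀ z, z = z₀ ∨ z = z₁) {a : Perm β} :
    IsFPFInvolution a ∧ a z₀ = z₁ ↔ a = swap z₀ z₁ := by
  constructor
  · rintro ⟨ha, ha₀⟩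
    have ha₁ : a z₁ = z₀ := by rw [← ha₀, ← Perm.mul_apply, ha.1, Perm.one_apply]
    ext z
    rcases hβ z with rfl | rfl <;> simp [ha₀, ha₁]
  · rintro rfl
    refine ⟨⟨swap_mul_self z₀ z₁, fun z => ?_⟩, swap_apply_left z₀ z₁⟩
    rcases hβ z with rfl | rfl <;> simp [h, h.symm]

theorem IsFPFInvolution.apply_mem_pair_iff [DecidableEq β] {a : Perm β} (ha : IsFPFInvolution a)
    {x₀ x₁ : β} (h : a x₀ = x₁) (x : β) :
    a x ∈ ({x₀, x₁} : Finset β) ↔ x ∈ ({x₀, x₁} : Finset β) := by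
  have key : ∀ y z, a y = z ↔ y = a z := fun y z =>
    ⟨fun hyz => hyz ▸ (ha.apply_apply y).symm, fun hyz => hyz ▸ ha.apply_apply z⟩
  have h' : a x₁ = x₀ := ((key _ _).1 h).symm
  simp only [Finset.mem_insert, Finset.mem_singleton, key, h, h']
  exact or_comm

theorem card_isFPFInvolution_apply_eq [Fintype β] [DecidableEq β] {x₀ x₁ : β} (h : x₀ ≠ x₁) :
    Nat.card {a : {a : Perm β // IsFPFInvolution a} // a.1 x₀ = x₁} =
      numFPFInv (Fin (Fintype.card β - 2)) := by
  set s : Finset β := {x₀, x₁}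
  have hx₀ : x₀ ∈ s := Finset.mem_insert_self _ _
  have hx₁ : x₁ ∈ s := Finset.mem_insert_of_mem (Finset.mem_singleton_self _)
  have hs : ∀ z : {x // x ∈ s}, z = ⟨x₀, hx₀⟩ ∨ z = ⟨x₁, hx₁⟩ := fun ⟨z, hz⟩ => by
    simpa [s, Subtype.ext_iff] using hz
  rw [Nat.card_congr (Equiv.subtypeSubtypeEquivSubtypeInter IsFPFInvolution (· x₀ = x₁)),
    ← Nat.card_subtype_subtypeCongr (· ∈ s) (R := fun f => IsFPFInvolution f ∧ f x₀ = x₁)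
      fun f hf => hf.1.apply_mem_pair_iff hf.2]
  have hsplit : ∀ ab : Perm {x // x ∈ s} × Perm {x // x ∉ s},
      IsFPFInvolution (ab.1.subtypeCongr ab.2) ∧ ab.1.subtypeCongr ab.2 x₀ = x₁ ↔
        ab.1 = swap ⟨x₀, hx₀⟩ ⟨x₁, hx₁⟩ ∧ IsFPFInvolution ab.2 := by
    rintro ⟨a, b⟩
    rw [isFPFInvolution_subtypeCongr, Perm.subtypeCongr.left_apply _ _ hx₀,
      ← isFPFInvolution_and_apply_eq_iff (by simpa using h) hs, Subtype.ext_iff]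
    tauto
  rw [Nat.card_congr ((Equiv.subtypeEquivRight hsplit).trans
      (Equiv.subtypeProdEquivProd (p := (· = swap _ _)) (q := IsFPFInvolution))),
    Nat.card_prod, Nat.card_unique, one_mul, ← numFPFInv, numFPFInv_eq_fin,
    Fintype.card_subtype_compl, Fintype.card_coe, Finset.card_pair h]

theorem numFPFInv_fin_add_two (n : ℕ) :
    numFPFInv (Fin (n + 2)) = (n + 1) * numFPFInv (Fin n) := by
  rw [numFPFInv, Nat.card_eq_sum_card_fiber (fun a : {a : Perm (Fin (n + 2)) // _} => a.1 0)
      (Finset.univ.erase 0) fun a => Finset.mem_erase.2 ⟨a.2.2 0, Finset.mem_univ _⟩,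
    Finset.sum_congr rfl fun x hx => card_isFPFInvolution_apply_eq (Finset.ne_of_mem_erase hx).symm]
  simp

section InitialBlock

variable {n : ℕ}

def IsInitialBlock (a : Perm (Fin n)) (q : ℕ) : Prop :=
  ∀ x : Fin n, (x : ℕ) < q → (a x : ℕ) < q

theorem indecomposable_iff_not_isInitialBlock {a : Perm (Fin n)} :
    Indecomposable a ↔ ∀ q, 1 ≤ q → q < n → ¬ IsInitialBlock a q := by
  simp only [Indecomposable, IsInitialBlock]
  push Not
  rfl

instance (a : Perm (Fin n)) : DecidablePred (IsInitialBlock a) := fun _ =>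
  inferInstanceAs (Decidable (∀ _, _))

theorem exists_isInitialBlock (a : Perm (Fin n)) : ∃ q, 0 < q ∧ IsInitialBlock a q :=
  ⟨n + 1, n.succ_pos, fun x _ => by omega⟩

-- For `n = 0` this is `1`, the witness in `exists_isInitialBlock`.
noncomputable def firstBlock (a : Perm (Fin n)) : ℕ := Nat.find (exists_isInitialBlock a)

theorem firstBlock_eq_iff {a : Perm (Fin n)} {k : ℕ} :
    firstBlock a = k ↔ 0 < k ∧ IsInitialBlock a k ∧ ∀ q, 0 < q → q < k → ¬ IsInitialBlock a q := by
  rw [firstBlock, Nat.find_eq_iff]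
  simp only [not_and, and_assoc]
  exact and_congr_right fun _ => and_congr_right fun _ => forall_congr' fun q => by tauto

theorem firstBlock_mem_Icc (a : Perm (Fin n)) (hn : 1 ≤ n) : firstBlock a ∈ Finset.Icc 1 n :=
  Finset.mem_Icc.2 ⟨(Nat.find_spec (exists_isInitialBlock a)).1,
    Nat.find_min' _ ⟨hn, fun x _ => (a x).2⟩⟩

theorem isInitialBlock_subtypeCongr_iff {k : ℕ} (hk : k ≤ n) (a : Perm {x : Fin n // (x : ℕ) < k})
    (b : Perm {x : Fin n // ¬ (x : ℕ) < k}) {q : ℕ} (hq : q ≤ k) :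
    IsInitialBlock (a.subtypeCongr b) q ↔
      IsInitialBlock ((Fin.castLEquiv hk).symm.permCongr a) q := by
  have hval : ∀ (x : Fin n) (hx : (x : ℕ) < k), ((a.subtypeCongr b x : Fin n) : ℕ) =
      ((Fin.castLEquiv hk).symm.permCongr a ⟨x, hx⟩ : ℕ) := fun x hx => by
    rw [Perm.subtypeCongr.left_apply (a := x) _ _ hx]
    rfl
  refine ⟨fun h i hi => ?_, fun h x hx => ?_⟩
  · simpa [hval (Fin.castLE hk i) i.2] using h (Fin.castLE hk i) hi
  · rw [hval x (by omega)]
    exact h _ hx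

-- Indexed by the number of points: `numIndecFPFInv m = numIndecFPFInvFin (2 * m)`.
variable (n) in
noncomputable def numIndecFPFInvFin : ℕ :=
  Nat.card {a : Perm (Fin n) // Indecomposable a ∧ IsFPFInvolution a}

theorem card_isFPFInvolution_firstBlock_eq {k : ℕ} (hk₀ : 0 < k) (hk : k ≤ n) :
    Nat.card {a : {a : Perm (Fin n) // IsFPFInvolution a} // firstBlock a.1 = k} =
      numIndecFPFInvFin k * numFPFInv (Fin (n - k)) := by
  set e := (Fin.castLEquiv hk).symm
  rw [Nat.card_congr (Equiv.subtypeSubtypeEquivSubtypeInter IsFPFInvolution (firstBlock · = k)),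
    ← Nat.card_subtype_subtypeCongr (fun x : Fin n => (x : ℕ) < k)
      (R := fun f => IsFPFInvolution f ∧ firstBlock f = k) fun f hf x => by
        have hblock := (firstBlock_eq_iff.1 hf.2).2.1
        exact ⟨fun h => hf.1.apply_apply x ▸ hblock (f x) h, hblock x⟩]
  have hsplit : ∀ ab : Perm {x : Fin n // (x : ℕ) < k} × Perm {x : Fin n // ¬ (x : ℕ) < k},
      IsFPFInvolution (ab.1.subtypeCongr ab.2) ∧ firstBlock (ab.1.subtypeCongr ab.2) = k ↔
        (Indecomposable (e.permCongr ab.1) ∧ IsFPFInvolution ab.1) ∧ IsFPFInvolution ab.2 := by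
    rintro ⟨a, b⟩
    have hblock : IsInitialBlock (a.subtypeCongr b) k := fun x hx => by
      rw [Perm.subtypeCongr.left_apply (a := x) _ _ hx]
      exact (a ⟨x, hx⟩).2
    rw [isFPFInvolution_subtypeCongr, firstBlock_eq_iff, indecomposable_iff_not_isInitialBlock]
    simp only [hk₀, hblock, true_and]
    have hind : (∀ q, 0 < q → q < k → ¬ IsInitialBlock (a.subtypeCongr b) q) ↔
        ∀ q, 1 ≤ q → q < k → ¬ IsInitialBlock (e.permCongr a) q :=
      forall_congr' fun q => imp_congr_right fun _ => forall_congr' fun hq =>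
        not_congr (isInitialBlock_subtypeCongr_iff hk a b hq.le)
    rw [hind]
    tauto
  rw [Nat.card_congr ((Equiv.subtypeEquivRight hsplit).trans
      (Equiv.subtypeProdEquivProd (p := fun a => Indecomposable (e.permCongr a) ∧ _)
        (q := IsFPFInvolution))), Nat.card_prod]
  congr 1
  · exact Nat.card_congr (e.permCongr.subtypeEquiv fun a => by rw [isFPFInvolution_permCongr])
  · rw [← numFPFInv, numFPFInv_eq_fin, Fintype.card_subtype_compl, Fintype.card_fin,
      Fintype.card_congr e, Fintype.card_fin]

end InitialBlock

theorem numFPFInv_fin_succ_eq_sum (n : ℕ) :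
    numFPFInv (Fin (n + 1)) =
      ∑ k ∈ Finset.range (n + 1), numIndecFPFInvFin (k + 1) * numFPFInv (Fin (n - k)) := by
  rw [numFPFInv,
    Nat.card_eq_sum_card_fiber (fun a : {a : Perm (Fin (n + 1)) // _} => firstBlock a.1)
      (Finset.Icc 1 (n + 1)) fun a => firstBlock_mem_Icc a.1 n.succ_pos,
    Finset.sum_congr rfl fun k hk =>
      card_isFPFInvolution_firstBlock_eq (Finset.mem_Icc.1 hk).1 (Finset.mem_Icc.1 hk).2,
    ← Finset.Ico_add_one_right_eq_Icc, Finset.sum_Ico_eq_sum_range]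
  refine Finset.sum_congr rfl fun k _ => ?_
  rw [add_comm 1 k, Nat.add_sub_add_right]

theorem mem_orbit_subgroup_iff {G : Subgroup (Perm β)} {x y : β} :
    y ∈ orbit G x ↔ ∃ g ∈ G, g x = y := by
  simp only [mem_orbit_iff, Subtype.exists, Subgroup.mk_smul, Perm.smul_def, exists_prop]

theorem orbit_closure_subtypeCongr {p : β → Prop} [DecidablePred p]
    (σ α : Perm {x // p x} × Perm {x // ¬ p x}) {x₀ : β} (h₀ : p x₀) :
    orbit (Subgroup.closure {σ.1.subtypeCongr σ.2, α.1.subtypeCongr α.2}) x₀ =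
      Subtype.val '' orbit (Subgroup.closure {σ.1, α.1}) ⟨x₀, h₀⟩ := by
  set K := Subgroup.closure ({σ, α} : Set (Perm {x // p x} × Perm {x // ¬ p x}))
  have hK : Subgroup.closure {σ.1.subtypeCongr σ.2, α.1.subtypeCongr α.2} =
      K.map (Perm.subtypeCongrHom p) := by
    rw [MonoidHom.map_closure, Set.image_pair]
    rfl
  have hK₁ : Subgroup.closure {σ.1, α.1} = K.map (MonoidHom.fst _ _) := by
    rw [MonoidHom.map_closure, Set.image_pair]
    rfl
  ext y
  simp only [hK, hK₁, mem_orbit_subgroup_iff, Set.mem_image, Subgroup.mem_map]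
  constructor
  · rintro ⟨_, ⟨k, hk, rfl⟩, rfl⟩
    exact ⟨_, ⟨_, ⟨k, hk, rfl⟩, rfl⟩, (Perm.subtypeCongr.left_apply _ _ h₀).symm⟩
  · rintro ⟨_, ⟨_, ⟨k, hk, rfl⟩, rfl⟩, rfl⟩
    exact ⟨_, ⟨k, hk, rfl⟩, Perm.subtypeCongr.left_apply _ _ h₀⟩

theorem orbit_closure_subtypeCongr_eq_iff {p : β → Prop} [DecidablePred p]
    (σ α : Perm {x // p x} × Perm {x // ¬ p x}) {x₀ : β} (h₀ : p x₀) :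
    orbit (Subgroup.closure {σ.1.subtypeCongr σ.2, α.1.subtypeCongr α.2}) x₀ = {x | p x} ↔
      IsPretransitive (Subgroup.closure {σ.1, α.1}) {x // p x} := by
  rw [orbit_closure_subtypeCongr σ α h₀, isPretransitive_iff_orbit_eq_univ ⟨x₀, h₀⟩,
    ← Subtype.val_injective.image_injective.eq_iff, Set.image_univ, Subtype.range_coe_subtype]

theorem apply_mem_orbit_iff {G : Subgroup (Perm β)} {g : Perm β} (hg : g ∈ G) {x y : β} :
    g y ∈ orbit G x ↔ y ∈ orbit G x := by
  have h := orbit_smul (⟨g, hg⟩ : G) y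
  rw [Subgroup.mk_smul, Perm.smul_def] at h
  rw [← orbit_eq_iff, h, orbit_eq_iff]

theorem isPretransitive_subgroup_iff {G : Subgroup (Perm β)} :
    IsPretransitive G β ↔ ∀ x y, ∃ g ∈ G, g x = y := by
  simp only [isPretransitive_iff, Subtype.exists, Subgroup.mk_smul, Perm.smul_def, exists_prop]

theorem isTransitivePair_iff_isPretransitive {n : ℕ} {σ α : Perm (Fin n)} :
    IsTransitivePair σ α ↔ IsPretransitive (Subgroup.closure {σ, α}) (Fin n) :=
  isPretransitive_subgroup_iff.symm

theorem isPretransitive_closure_permCongr (e : β ≃ γ) (σ α : Perm β) :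
    IsPretransitive (Subgroup.closure {e.permCongr σ, e.permCongr α}) γ ↔
      IsPretransitive (Subgroup.closure {σ, α}) β := by
  have h : Subgroup.closure {e.permCongr σ, e.permCongr α} =
      (Subgroup.closure {σ, α}).map e.permCongrHom.toMonoidHom := by
    rw [MonoidHom.map_closure, Set.image_pair]
    rfl
  simp only [isPretransitive_subgroup_iff, h, Subgroup.mem_map, e.surjective.forall,
    exists_exists_and_eq_and]
  simp [Equiv.permCongrHom]

variable (β) in
noncomputable def numLabeledMaps : ℕ :=
  Nat.card {P : Perm β × Perm β //
    IsPretransitive (Subgroup.closure {P.1, P.2}) β ∧ IsFPFInvolution P.2}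

theorem numLabeledMaps_congr (e : β ≃ γ) : numLabeledMaps β = numLabeledMaps γ :=
  Nat.card_congr <| (e.permCongr.prodCongr e.permCongr).subtypeEquiv fun P =>
    (isPretransitive_closure_permCongr e P.1 P.2).symm.and (isFPFInvolution_permCongr e).symm

theorem numLabeledMaps_eq_fin [Fintype β] :
    numLabeledMaps β = numLabeledMaps (Fin (Fintype.card β)) :=
  numLabeledMaps_congr (Fintype.equivFin β)

theorem card_prod_isFPFInvolution [Fintype β] :
    Nat.card {P : Perm β × Perm β // IsFPFInvolution P.2} =
      (Fintype.card β).factorial * numFPFInv (Fin (Fintype.card β)) := by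
  have e : {P : Perm β × Perm β // IsFPFInvolution P.2} ≃
      {a : Perm β // IsFPFInvolution a} × Perm β :=
    ((Equiv.prodComm _ _).subtypeEquiv fun _ => Iff.rfl).trans
      Equiv.prodSubtypeFstEquivSubtypeProd
  rw [Nat.card_congr e, Nat.card_prod, Nat.card_perm, ← numFPFInv,
    numFPFInv_eq_fin, Nat.card_eq_fintype_card, mul_comm]

theorem card_isFPFInvolution_orbit_eq [Fintype β] [DecidableEq β] {x₀ : β} {s : Finset β}
    (h₀ : x₀ ∈ s) :
    Nat.card {P : {P : Perm β × Perm β // IsFPFInvolution P.2} //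
        orbit (Subgroup.closure {P.1.1, P.1.2}) x₀ = s} =
      numLabeledMaps (Fin s.card) *
        ((Fintype.card β - s.card).factorial * numFPFInv (Fin (Fintype.card β - s.card))) := by
  let Φ : (Perm {x // x ∈ s} × Perm {x // x ∈ s}) × (Perm {x // x ∉ s} × Perm {x // x ∉ s}) →
      Perm β × Perm β := fun Q => (Q.1.1.subtypeCongr Q.2.1, Q.1.2.subtypeCongr Q.2.2)
  have hΦ : Function.Injective Φ := by
    rintro ⟨⟨σ₁, α₁⟩, σ₂, α₂⟩ ⟨⟨τ₁, β₁⟩, τ₂, β₂⟩ h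
    obtain ⟨hσ, hα⟩ := Prod.mk.inj h
    obtain ⟨rfl, rfl⟩ := Prod.mk.inj (Perm.subtypeCongrHom_injective _ (a₁ := (σ₁, σ₂))
      (a₂ := (τ₁, τ₂)) hσ)
    obtain ⟨rfl, rfl⟩ := Prod.mk.inj (Perm.subtypeCongrHom_injective _ (a₁ := (α₁, α₂))
      (a₂ := (β₁, β₂)) hα)
    rfl
  have hsplit : ∀ Q, (IsFPFInvolution (Φ Q).2 ∧
      orbit (Subgroup.closure {(Φ Q).1, (Φ Q).2}) x₀ = s) ↔
        (IsPretransitive (Subgroup.closure {Q.1.1, Q.1.2}) {x // x ∈ s} ∧ IsFPFInvolution Q.1.2) ∧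
          IsFPFInvolution Q.2.2 := by
    rintro ⟨⟨σ₁, α₁⟩, σ₂, α₂⟩
    rw [isFPFInvolution_subtypeCongr, ← orbit_closure_subtypeCongr_eq_iff (σ₁, σ₂) (α₁, α₂) h₀]
    exact ⟨fun h => ⟨⟨h.2, h.1.1⟩, h.1.2⟩, fun h => ⟨⟨h.1.2, h.2⟩, h.1.1⟩⟩
  rw [Nat.card_congr (Equiv.subtypeSubtypeEquivSubtypeInter
      (fun P : Perm β × Perm β => IsFPFInvolution P.2)
      (fun P => orbit (Subgroup.closure {P.1, P.2}) x₀ = s)),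
    ← Nat.card_subtype_comp_of_injective hΦ fun P hP => ?_]
  · have e : {Q // IsFPFInvolution (Φ Q).2 ∧
        orbit (Subgroup.closure {(Φ Q).1, (Φ Q).2}) x₀ = s} ≃
        {Q : Perm {x // x ∈ s} × Perm {x // x ∈ s} //
          IsPretransitive (Subgroup.closure {Q.1, Q.2}) {x // x ∈ s} ∧ IsFPFInvolution Q.2} ×
        {Q : Perm {x // x ∉ s} × Perm {x // x ∉ s} // IsFPFInvolution Q.2} :=
      (Equiv.subtypeEquivRight hsplit).trans <| Equiv.subtypeProdEquivProd
        (p := fun Q : Perm {x // x ∈ s} × Perm {x // x ∈ s} =>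
          IsPretransitive (Subgroup.closure {Q.1, Q.2}) {x // x ∈ s} ∧ IsFPFInvolution Q.2)
        (q := fun Q : Perm {x // x ∉ s} × Perm {x // x ∉ s} => IsFPFInvolution Q.2)
    rw [Nat.card_congr e, Nat.card_prod, ← numLabeledMaps,
      numLabeledMaps_eq_fin, Fintype.card_coe, card_prod_isFPFInvolution,
      Fintype.card_subtype_compl, Fintype.card_coe]
  · obtain ⟨σ, α⟩ := P
    have hpres : ∀ g ∈ Subgroup.closure {σ, α}, ∀ x, g x ∈ s ↔ x ∈ s := fun g hg x => by
      rw [← Finset.mem_coe, ← Finset.mem_coe (s := s), ← hP.2]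
      exact apply_mem_orbit_iff hg
    obtain ⟨σ₁, σ₂, rfl⟩ := Perm.exists_subtypeCongr_eq (p := (· ∈ s))
      (hpres σ (Subgroup.subset_closure (Set.mem_insert _ _)))
    obtain ⟨α₁, α₂, rfl⟩ := Perm.exists_subtypeCongr_eq (p := (· ∈ s))
      (hpres α (Subgroup.subset_closure (Set.mem_insert_of_mem _ rfl)))
    exact ⟨((σ₁, α₁), σ₂, α₂), rfl⟩

theorem factorial_mul_numFPFInv_fin_succ_eq_sum (n : ℕ) :
    (n + 1).factorial * numFPFInv (Fin (n + 1)) =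
      ∑ k ∈ Finset.range (n + 1), n.choose k *
        (numLabeledMaps (Fin (k + 1)) * ((n - k).factorial * numFPFInv (Fin (n - k)))) := by
  classical
  have hpairs := card_prod_isFPFInvolution (β := Fin (n + 1))
  rw [Fintype.card_fin] at hpairs
  rw [← hpairs, Nat.card_eq_sum_card_fiber
      (fun P : {P : Perm (Fin (n + 1)) × Perm (Fin (n + 1)) // _} =>
        (orbit (Subgroup.closure {P.1.1, P.1.2}) (0 : Fin (n + 1))).toFinset.erase 0)
      (Finset.univ.erase 0).powerset
      fun P => Finset.mem_powerset.2 (Finset.erase_subset_erase _ (Finset.subset_univ _))]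
  have hfiber : ∀ t ∈ (Finset.univ.erase (0 : Fin (n + 1))).powerset,
      Nat.card {P : {P : Perm (Fin (n + 1)) × Perm (Fin (n + 1)) // IsFPFInvolution P.2} //
        (orbit (Subgroup.closure {P.1.1, P.1.2}) (0 : Fin (n + 1))).toFinset.erase 0 = t} =
      numLabeledMaps (Fin (t.card + 1)) *
        ((n - t.card).factorial * numFPFInv (Fin (n - t.card))) := by
    intro t ht
    have h0t : 0 ∉ t := fun h => by simpa using Finset.mem_powerset.1 ht h
    rw [Nat.card_congr (Equiv.subtypeEquivRight fun P => by
        rw [Finset.erase_eq_iff_eq_insert (Set.mem_toFinset.2 (mem_orbit_self _)) h0t,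
          ← Finset.coe_inj, Set.coe_toFinset]),
      card_isFPFInvolution_orbit_eq (Finset.mem_insert_self 0 t), Finset.card_insert_of_notMem h0t,
      Fintype.card_fin, Nat.add_sub_add_right]
  rw [Finset.sum_congr rfl hfiber, Finset.sum_powerset_apply_card
      (fun k => numLabeledMaps (Fin (k + 1)) * ((n - k).factorial * numFPFInv (Fin (n - k)))),
    Finset.card_erase_of_mem (Finset.mem_univ _), Finset.card_univ, Fintype.card_fin,
    Nat.add_sub_cancel]
  rfl

theorem numIndecFPFInvFin_one : numIndecFPFInvFin 1 = 0 :=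
  Nat.card_eq_zero.2 <| Or.inl ⟨fun a => a.2.2.2 0 (Subsingleton.elim _ _)⟩

theorem numIndecFPFInvFin_two : numIndecFPFInvFin 2 = 1 := by
  have h : ∀ a : Perm (Fin 2), IsFPFInvolution a ↔ a = swap 0 1 := fun a => by
    rw [← isFPFInvolution_and_apply_eq_iff (by decide) fun z => by fin_cases z <;> simp]
    exact ⟨fun ha => ⟨ha, by have := ha.2 0; omega⟩, And.left⟩
  have hind : Indecomposable (swap (0 : Fin 2) 1) := fun q hq₁ hq₂ => by
    obtain rfl : q = 1 := by omega
    exact ⟨0, by decide, by decide⟩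
  exact Nat.card_eq_one_iff_exists.2
    ⟨⟨swap 0 1, hind, (h _).2 rfl⟩, fun a => Subtype.ext ((h a.1).1 a.2.2)⟩

theorem succ_mul_numFPFInv_fin_succ_eq_sum (n : ℕ) :
    (n + 1) * numFPFInv (Fin (n + 1)) =
      ∑ k ∈ Finset.range (n + 1), numIndecFPFInvFin (k + 3) * numFPFInv (Fin (n - k)) := by
  have h := numFPFInv_fin_succ_eq_sum (n + 2)
  rw [Finset.sum_range_succ', Finset.sum_range_succ', numIndecFPFInvFin_one,
    numIndecFPFInvFin_two, numFPFInv_fin_add_two] at h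
  simp only [Nat.reduceSubDiff, zero_add, Nat.add_one_sub_one, one_mul, tsub_zero, zero_mul,
    add_zero] at h
  linarith

theorem numLabeledMaps_fin_succ (n : ℕ) :
    numLabeledMaps (Fin (n + 1)) = n.factorial * numIndecFPFInvFin (n + 3) := by
  induction n using Nat.strong_induction_on with
  | _ n ih =>
  have hC := factorial_mul_numFPFInv_fin_succ_eq_sum n
  have hD := succ_mul_numFPFInv_fin_succ_eq_sum n
  rw [Finset.sum_range_succ, Nat.choose_self, Nat.sub_self, numFPFInv_fin_zero] at hC
  rw [Finset.sum_range_succ, Nat.sub_self, numFPFInv_fin_zero] at hD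
  have hlow : ∑ k ∈ Finset.range n, n.choose k *
      (numLabeledMaps (Fin (k + 1)) * ((n - k).factorial * numFPFInv (Fin (n - k)))) =
      n.factorial * ∑ k ∈ Finset.range n, numIndecFPFInvFin (k + 3) * numFPFInv (Fin (n - k)) := by
    rw [Finset.mul_sum]
    refine Finset.sum_congr rfl fun k hk => ?_
    rw [ih k (Finset.mem_range.1 hk), ← Nat.choose_mul_factorial_mul_factorial
      (Finset.mem_range.1 hk).le]
    ring
  rw [hlow, Nat.factorial_succ, mul_comm (n + 1), mul_assoc, hD] at hC
  simpa [mul_add] using hC.symm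

theorem labeled_maps_eq_factorial_mul_indec_involutions (m : ℕ) (hm : 1 ≤ m) :
    Nat.card {P : Equiv.Perm (Fin (2 * m)) × Equiv.Perm (Fin (2 * m)) //
        IsTransitivePair P.1 P.2 ∧ P.2 * P.2 = 1 ∧ ∀ x, P.2 x ≠ x} =
      Nat.factorial (2 * m - 1) * numIndecFPFInv (m + 1) := by
  have h := numLabeledMaps_fin_succ (2 * m - 1)
  rw [show 2 * m - 1 + 1 = 2 * m by omega, show 2 * m - 1 + 3 = 2 * (m + 1) by omega] at h
  rw [show numIndecFPFInv (m + 1) = numIndecFPFInvFin (2 * (m + 1)) from rfl, ← h]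
  exact Nat.card_congr <| Equiv.subtypeEquivRight fun P =>
    isTransitivePair_iff_isPretransitive.and Iff.rfl
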